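/- arXiv:1104.3071 — 7 statements merged into one kernel-verified Lean document; each statement's English description precedes it below -/
import Mathlib

section
/- Let 𝔤 be a stratified real Lie algebra with dim 𝔤 ≥ 2, and let L = 𝔤 ⋊ ℝ·D_L be the semidirect product of 𝔤 by its grading derivation. Then every nilpotent Lie subalgebra 𝔥 of L with dim 𝔥 = dim L − 1 is equal to 𝔤 (viewed as an ideal of L). -/
/-!
If `H ≠ 𝔤`, then by dimension `H ⊄ 𝔤`, so `H` contains an element `D + X` with `X ∈ 𝔤`, and
`ad (D + X)` is nilpotent on `H` because `H` is nilpotent. On `𝔤`, however, `ad (D + X)` is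
injective: on the filtration `F j = ⨁_{k ≥ j} V k` it acts as `j • id` modulo `F (j + 1)`,
since `ad X` raises the filtration degree. Hence `H ∩ 𝔤 = 0`, which is impossible once
`dim H = dim 𝔤 ≥ 2`.
-/

open Module

def bracketSpan {L : Type*} [LieRing L] [LieAlgebra ℝ L]
    (A B : Submodule ℝ L) : Submodule ℝ L :=
  Submodule.span ℝ {z | ∃ x ∈ A, ∃ y ∈ B, ⁅x, y⁆ = z}

/-- `L = 𝔤 ⋊ ℝ·D` is the semidirect product of the stratified Lie algebra `𝔤 = g`
(with stratification `V 1 ⊕ ⋯ ⊕ V s`, `g` a Lie ideal of `L`) by its grading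
derivation: `L = g ⊕ ℝ·D` as vector spaces and `⁅D, X⁆ = j • X` for `X ∈ V j`. -/
structure IsSemidirectTD {L : Type*} [LieRing L] [LieAlgebra ℝ L]
    (s : ℕ) (V : ℕ → Submodule ℝ L) (g : LieIdeal ℝ L) (D : L) : Prop where
  s_pos : 0 < s
  top_ne_bot : V s ≠ ⊥
  eq_bot_of_notin : ∀ j : ℕ, j = 0 ∨ s < j → V j = ⊥
  independent : iSupIndep V
  sup_eq : ⨆ j, V j = (g : Submodule ℝ L)
  bracket_eq : ∀ j : ℕ, 1 ≤ j → j ≤ s → bracketSpan (V j) (V 1) = V (j + 1)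
  D_notin : D ∉ (g : Submodule ℝ L)
  compl_sup : (g : Submodule ℝ L) ⊔ (ℝ ∙ D) = ⊤
  compl_inf : (g : Submodule ℝ L) ⊓ (ℝ ∙ D) = ⊥
  grading : ∀ j : ℕ, 1 ≤ j → j ≤ s → ∀ X ∈ V j, ⁅D, X⁆ = (j : ℝ) • X

open LieAlgebra

section GradedFiltration

variable {R M : Type*} [Semiring R] [AddCommMonoid M] [Module R M]

def gradedFiltration (V : ℕ → Submodule R M) (j : ℕ) : Submodule R M :=
  ⨆ k, ⨆ _ : j ≤ k, V k

variable {V : ℕ → Submodule R M}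

lemma le_gradedFiltration {j k : ℕ} (h : j ≤ k) : V k ≤ gradedFiltration V j :=
  le_iSup₂ (f := fun k (_ : j ≤ k) => V k) k h

lemma gradedFiltration_antitone : Antitone (gradedFiltration V) :=
  fun _ _ h => iSup₂_le fun _ hk => le_gradedFiltration (h.trans hk)

lemma gradedFiltration_eq_sup (j : ℕ) :
    gradedFiltration V j = V j ⊔ gradedFiltration V (j + 1) := by
  refine le_antisymm (iSup₂_le fun k hk => ?_)
    (sup_le (le_gradedFiltration le_rfl) (gradedFiltration_antitone j.le_succ))
  rcases hk.eq_or_lt with rfl | hk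
  · exact le_sup_left
  · exact (le_gradedFiltration hk).trans le_sup_right

lemma gradedFiltration_eq_bot {s : ℕ} (h : ∀ k, s < k → V k = ⊥) :
    gradedFiltration V (s + 1) = ⊥ :=
  le_bot_iff.mp <| iSup₂_le fun k hk => (h k hk).le

lemma disjoint_gradedFiltration_succ (hV : iSupIndep V) (j : ℕ) :
    Disjoint (V j) (gradedFiltration V (j + 1)) :=
  (hV j).mono_right <| iSup₂_le fun k hk =>
    le_iSup₂ (f := fun k (_ : k ≠ j) => V k) k (by omega)

end GradedFiltration

lemma LieSubalgebra.le_engel_of_isNilpotent {R L : Type*} [CommRing R] [LieRing L]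
    [LieAlgebra R L] (H : LieSubalgebra R L) [LieRing.IsNilpotent H] {x : L} (hx : x ∈ H) :
    H ≤ engel R x := by
  intro y hy
  obtain ⟨n, hn⟩ := LieModule.isNilpotent_toEnd_of_isNilpotent R H H (⟨x, hx⟩ : H)
  refine (mem_engel_iff R x y).mpr ⟨n, ?_⟩
  rw [← coe_ad_pow R L H ⟨x, hx⟩ ⟨y, hy⟩ n, show ad R H ⟨x, hx⟩ ^ n = 0 from hn]
  rfl

namespace IsSemidirectTD

variable {L : Type*} [LieRing L] [LieAlgebra ℝ L]
  {s : ℕ} {V : ℕ → Submodule ℝ L} {g : LieIdeal ℝ L} {D : L}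

lemma finrank_eq_finrank_add_one [FiniteDimensional ℝ L] (hTD : IsSemidirectTD s V g D) :
    finrank ℝ L = finrank ℝ (g : Submodule ℝ L) + 1 := by
  have hD : D ≠ 0 := fun h => hTD.D_notin (h ▸ zero_mem _)
  have := Submodule.finrank_sup_add_finrank_inf_eq (g : Submodule ℝ L) (ℝ ∙ D)
  rwa [hTD.compl_sup, hTD.compl_inf, finrank_top, finrank_bot, add_zero,
    finrank_span_singleton hD] at this

lemma exists_add_mem_of_not_le (hTD : IsSemidirectTD s V g D) {H : Submodule ℝ L}
    (hH : ¬ H ≤ g) : ∃ X ∈ (g : Submodule ℝ L), D + X ∈ H := by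
  obtain ⟨w, hwH, hwg⟩ := SetLike.not_le_iff_exists.mp hH
  have hw : w ∈ (g : Submodule ℝ L) ⊔ ℝ ∙ D := hTD.compl_sup ▸ Submodule.mem_top
  obtain ⟨X, hX, _, hd, rfl⟩ := Submodule.mem_sup.mp hw
  obtain ⟨c, rfl⟩ := Submodule.mem_span_singleton.mp hd
  have hc : c ≠ 0 := by
    rintro rfl
    simp_all
  refine ⟨c⁻¹ • X, Submodule.smul_mem _ _ hX, ?_⟩
  convert H.smul_mem c⁻¹ hwH using 1
  rw [smul_add, smul_smul, inv_mul_cancel₀ hc, one_smul, add_comm]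

lemma eq_zero_of_mem (hTD : IsSemidirectTD s V g D) {j : ℕ} (hj : j = 0 ∨ s < j)
    {x : L} (hx : x ∈ V j) : x = 0 := by
  rwa [hTD.eq_bot_of_notin j hj, Submodule.mem_bot] at hx

lemma lie_D_eq_smul (hTD : IsSemidirectTD s V g D) {j : ℕ} {x : L} (hx : x ∈ V j) :
    ⁅D, x⁆ = (j : ℝ) • x := by
  by_cases hj : 1 ≤ j ∧ j ≤ s
  · exact hTD.grading j hj.1 hj.2 x hx
  · simp [hTD.eq_zero_of_mem (by omega) hx]

lemma lie_mem_succ (hTD : IsSemidirectTD s V g D) {i : ℕ} {x y : L}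
    (hx : x ∈ V i) (hy : y ∈ V 1) : ⁅x, y⁆ ∈ V (i + 1) := by
  by_cases hi : 1 ≤ i ∧ i ≤ s
  · rw [← hTD.bracket_eq i hi.1 hi.2]
    exact Submodule.subset_span ⟨x, hx, y, hy, rfl⟩
  · simp [hTD.eq_zero_of_mem (by omega) hx]

lemma lie_mem_add (hTD : IsSemidirectTD s V g D) {i j : ℕ} {x y : L}
    (hx : x ∈ V i) (hy : y ∈ V j) : ⁅x, y⁆ ∈ V (i + j) := by
  induction j generalizing i x y with
  | zero => simp [hTD.eq_zero_of_mem (.inl rfl) hy]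
  | succ j ih =>
    rcases Nat.eq_zero_or_pos j with rfl | hj
    · exact hTD.lie_mem_succ hx hy
    by_cases hjs : j ≤ s
    swap
    · simp [hTD.eq_zero_of_mem (by omega) hy]
    rw [← hTD.bracket_eq j hj hjs] at hy
    induction hy using Submodule.span_induction with
    | mem z hz =>
      obtain ⟨a, ha, b, hb, rfl⟩ := hz
      rw [leibniz_lie]
      refine add_mem (hTD.lie_mem_succ (ih hx ha) hb) ?_
      rw [← lie_skew, show i + (j + 1) = i + 1 + j by omega]
      exact neg_mem (ih (hTD.lie_mem_succ hx hb) ha)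
    | zero => simp
    | add a b _ _ ha hb => rw [lie_add]; exact add_mem ha hb
    | smul c a _ ha => rw [lie_smul]; exact Submodule.smul_mem _ c ha

lemma le_gradedFiltration_one (hTD : IsSemidirectTD s V g D) :
    (g : Submodule ℝ L) ≤ gradedFiltration V 1 := by
  rw [← hTD.sup_eq]
  refine iSup_le fun k x hx => ?_
  rcases Nat.eq_zero_or_pos k with rfl | hk
  · simp [hTD.eq_zero_of_mem (.inl rfl) hx]
  · exact le_gradedFiltration hk hx

lemma lie_D_mem_gradedFiltration (hTD : IsSemidirectTD s V g D) {j : ℕ} {Y : L}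
    (hY : Y ∈ gradedFiltration V j) : ⁅D, Y⁆ ∈ gradedFiltration V j := by
  suffices gradedFiltration V j ≤ (gradedFiltration V j).comap (ad ℝ L D) from this hY
  refine iSup₂_le fun k hk => ?_
  intro y hy
  show ⁅D, y⁆ ∈ gradedFiltration V j
  rw [hTD.lie_D_eq_smul hy]
  exact Submodule.smul_mem _ _ (le_gradedFiltration hk hy)

lemma lie_mem_gradedFiltration_succ (hTD : IsSemidirectTD s V g D) {j : ℕ} {X Y : L}
    (hX : X ∈ (g : Submodule ℝ L)) (hY : Y ∈ gradedFiltration V j) :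
    ⁅X, Y⁆ ∈ gradedFiltration V (j + 1) := by
  rw [← hTD.sup_eq] at hX
  refine Submodule.iSup_induction V (motive := fun x => ⁅x, Y⁆ ∈ gradedFiltration V (j + 1))
    hX (fun i x hx => ?_) (by simp) fun a b ha hb => ?_
  · rcases Nat.eq_zero_or_pos i with rfl | hi
    · simp [hTD.eq_zero_of_mem (.inl rfl) hx]
    suffices gradedFiltration V j ≤ (gradedFiltration V (j + 1)).comap (ad ℝ L x) from this hY
    refine iSup₂_le fun k hk => ?_
    intro y hy
    exact le_gradedFiltration (by omega) (hTD.lie_mem_add hx hy)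
  · rw [add_lie]; exact add_mem ha hb

/-- The leading term of `⁅D + X, Y⁆` in degree `j` is `j • Y_j`, so it cannot vanish unless
`Y_j = 0`. -/
lemma mem_gradedFiltration_succ_of_lie_eq_zero (hTD : IsSemidirectTD s V g D) {j : ℕ}
    (hj : j ≠ 0) {X Y : L} (hX : X ∈ (g : Submodule ℝ L)) (hY : Y ∈ gradedFiltration V j)
    (hDXY : ⁅D + X, Y⁆ = 0) : Y ∈ gradedFiltration V (j + 1) := by
  obtain ⟨y₁, hy₁, y₂, hy₂, rfl⟩ := Submodule.mem_sup.mp ((gradedFiltration_eq_sup j).le hY)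
  have hrest : ⁅D, y₂⁆ + ⁅X, y₁ + y₂⁆ ∈ gradedFiltration V (j + 1) :=
    add_mem (hTD.lie_D_mem_gradedFiltration hy₂) (hTD.lie_mem_gradedFiltration_succ hX hY)
  have hlead : (j : ℝ) • y₁ = -(⁅D, y₂⁆ + ⁅X, y₁ + y₂⁆) := by
    rw [← add_eq_zero_iff_eq_neg, ← hTD.lie_D_eq_smul hy₁, ← hDXY]
    simp only [add_lie, lie_add]
    abel
  have hzero : (j : ℝ) • y₁ = 0 :=
    (Submodule.disjoint_def.mp (disjoint_gradedFiltration_succ hTD.independent j))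
      _ (Submodule.smul_mem _ _ hy₁) (hlead ▸ neg_mem hrest)
  rw [(smul_eq_zero.mp hzero).resolve_left (Nat.cast_ne_zero.mpr hj), zero_add]
  exact hy₂

lemma eq_zero_of_lie_eq_zero (hTD : IsSemidirectTD s V g D) {X Y : L}
    (hX : X ∈ (g : Submodule ℝ L)) (hY : Y ∈ (g : Submodule ℝ L)) (hDXY : ⁅D + X, Y⁆ = 0) :
    Y = 0 := by
  have hmem : ∀ j, Y ∈ gradedFiltration V (j + 1) := fun j => by
    induction j with
    | zero => exact hTD.le_gradedFiltration_one hY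
    | succ j ih => exact hTD.mem_gradedFiltration_succ_of_lie_eq_zero j.succ_ne_zero hX ih hDXY
  simpa [gradedFiltration_eq_bot fun k hk => hTD.eq_bot_of_notin k (.inr hk)] using hmem s

lemma disjoint_engel (hTD : IsSemidirectTD s V g D) {X : L} (hX : X ∈ (g : Submodule ℝ L)) :
    Disjoint (LieSubalgebra.engel ℝ (D + X)).toSubmodule (g : Submodule ℝ L) := by
  refine Submodule.disjoint_def.mpr fun Y hYe hYg => ?_
  obtain ⟨n, hn⟩ := (LieSubalgebra.mem_engel_iff ℝ (D + X) Y).mp hYe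
  clear hYe
  induction n generalizing Y with
  | zero => simpa using hn
  | succ n ih =>
    rw [pow_succ, Module.End.mul_apply, ad_apply] at hn
    exact hTD.eq_zero_of_lie_eq_zero hX hYg (ih _ (g.lie_mem hYg) hn)

end IsSemidirectTD

/-- Every nilpotent Lie subalgebra of `L = 𝔤 ⋊ ℝ·D` of codimension one equals `𝔤`. -/
theorem stmt0 {L : Type*} [LieRing L] [LieAlgebra ℝ L] [FiniteDimensional ℝ L]
    (s : ℕ) (V : ℕ → Submodule ℝ L) (g : LieIdeal ℝ L) (D : L)
    (hTD : IsSemidirectTD s V g D)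
    (hdim : 2 ≤ finrank ℝ (g : Submodule ℝ L))
    (H : LieSubalgebra ℝ L) (hnil : LieRing.IsNilpotent H)
    (hcodim : finrank ℝ H = finrank ℝ L - 1) :
    H.toSubmodule = (g : Submodule ℝ L) := by
  have hL := hTD.finrank_eq_finrank_add_one
  have hH : finrank ℝ H.toSubmodule = finrank ℝ L - 1 := hcodim
  by_contra hne
  have hle : ¬ H.toSubmodule ≤ g := fun hHg =>
    hne (Submodule.eq_of_le_of_finrank_le hHg (by omega))
  obtain ⟨X, hX, hDX⟩ := hTD.exists_add_mem_of_not_le hle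
  have hdisj : Disjoint H.toSubmodule g :=
    (hTD.disjoint_engel hX).mono_left (H.le_engel_of_isNilpotent hDX)
  have := Submodule.finrank_add_finrank_le_of_disjoint hdisj
  omega
end

section
/- Let 𝔤 be a nonabelian stratified real Lie algebra (i.e. of step s ≥ 2) such that every strata-preserving derivation of 𝔤 is a real scalar multiple of the grading derivation D, and let L = 𝔤 ⋊ ℝ·D_L be the semidirect product of 𝔤 by D. Then every degree-one prolongation element u : 𝔤 → L is zero. (Equivalently: if the degree-zero part 𝔤_0 of the Tanaka prolongation of 𝔤 is one-dimensional, then the Tanaka prolongation of 𝔤 equals 𝔤 ⊕ 𝔤_0.) -/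
open Module

/-- A degree-one Tanaka prolongation element: a linear map `u : 𝔤 → L` (here encoded as a
linear endomorphism of `L`, only its restriction to `g` being relevant) with
`u(V 1) ⊆ ℝ·D`, `u(V j) ⊆ V (j-1)` for `2 ≤ j ≤ s`, and
`u([X,Y]) = [u X, Y] + [X, u Y]` for `X, Y ∈ 𝔤`. -/
structure IsProlongOne {L : Type*} [LieRing L] [LieAlgebra ℝ L]
    (s : ℕ) (V : ℕ → Submodule ℝ L) (g : LieIdeal ℝ L) (D : L)
    (u : L →ₗ[ℝ] L) : Prop where
  map_first : ∀ X ∈ V 1, u X ∈ (ℝ ∙ D)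
  map_strata : ∀ j : ℕ, 2 ≤ j → j ≤ s → ∀ X ∈ V j, u X ∈ V (j - 1)
  leibniz : ∀ X ∈ (g : Submodule ℝ L), ∀ Y ∈ (g : Submodule ℝ L),
    u ⁅X, Y⁆ = ⁅u X, Y⁆ + ⁅X, u Y⁆

lemma prolong_contra {L : Type*} [LieRing L] [LieAlgebra ℝ L]
    (s : ℕ) (V : ℕ → Submodule ℝ L) (g : LieIdeal ℝ L) (D : L)
    (hTD : IsSemidirectTD s V g D) (hs : 2 ≤ s)
    (u : L →ₗ[ℝ] L) (hu : IsProlongOne s V g D u)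
    (X : L) (hX : X ∈ V 1) (hXD : u X = D) : False := by
  have hVg : ∀ j, V j ≤ (g : Submodule ℝ L) := by
    intro j
    rw [← hTD.sup_eq]
    exact le_iSup V j
  have hXg : X ∈ (g : Submodule ℝ L) := hVg 1 hX
  set A : Module.End ℝ L := LieAlgebra.ad ℝ L X with hA
  have hAapp : ∀ Y : L, A Y = ⁅X, Y⁆ := fun Y => rfl
  -- bracket with X raises strata
  have hbr : ∀ j, 1 ≤ j → j ≤ s → ∀ Y ∈ V j, ⁅X, Y⁆ ∈ V (j + 1) := by
    intro j h1 h2 Y hY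
    have : ⁅Y, X⁆ ∈ V (j + 1) := by
      rw [← hTD.bracket_eq j h1 h2]
      exact Submodule.subset_span ⟨Y, hY, X, hX, rfl⟩
    have h' : (-⁅Y, X⁆ : L) ∈ V (j + 1) := neg_mem this
    rwa [lie_skew] at h'
  -- key Leibniz formula
  have hF : ∀ j, 1 ≤ j → j ≤ s → ∀ Y ∈ V j, ⁅X, u Y⁆ = u ⁅X, Y⁆ - (j : ℝ) • Y := by
    intro j h1 h2 Y hY
    have hl := hu.leibniz X hXg Y (hVg j hY)
    rw [hXD, hTD.grading j h1 h2 Y hY] at hl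
    rw [hl]
    abel
  -- downward induction
  have hP : ∀ d, d ≤ s - 1 → ∃ m : ℝ, 0 < m ∧
      ∀ Z ∈ V (s - d), (A ^ (d + 1)) (u Z) = (-m) • ((A ^ d) Z) := by
    intro d
    induction d with
    | zero =>
      intro _
      refine ⟨(s : ℝ), by positivity, ?_⟩
      intro Z hZ
      simp only [Nat.sub_zero] at hZ
      have hXZ : ⁅X, Z⁆ = 0 := by
        have := hbr s (by omega) le_rfl Z hZ
        rw [hTD.eq_bot_of_notin (s + 1) (Or.inr (Nat.lt_succ_self s))] at this
        simpa using this
      have := hF s (by omega) le_rfl Z hZ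
      rw [hXZ, map_zero, zero_sub] at this
      simp only [Nat.sub_zero, zero_add, pow_one, pow_zero, Module.End.one_apply]
      rw [hAapp, this, neg_smul]
    | succ d ih =>
      intro hd1
      obtain ⟨m, hm, hrec⟩ := ih (by omega)
      refine ⟨m + ((s - (d + 1) : ℕ) : ℝ), ?_, ?_⟩
      · have : 1 ≤ s - (d + 1) := by omega
        have : (1 : ℝ) ≤ ((s - (d + 1) : ℕ) : ℝ) := by exact_mod_cast this
        linarith
      intro Z hZ
      set j := s - (d + 1) with hj
      have h1j : 1 ≤ j := by omega
      have hjs : j ≤ s := by omega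
      have hXZ : ⁅X, Z⁆ ∈ V (s - d) := by
        have : j + 1 = s - d := by omega
        rw [← this]
        exact hbr j h1j hjs Z hZ
      have key : (A ^ (d + 1)) (A (u Z)) = (A ^ (d + 1)) (u ⁅X, Z⁆) - (j : ℝ) • (A ^ (d + 1)) Z := by
        rw [hAapp, hF j h1j hjs Z hZ, map_sub, map_smul]
      have e1 : (A ^ (d + 2)) (u Z) = (A ^ (d + 1)) (A (u Z)) := by
        rw [pow_succ]
        rfl
      have e2 : (A ^ (d + 1)) (u ⁅X, Z⁆) = (-m) • ((A ^ d) ⁅X, Z⁆) := hrec ⁅X, Z⁆ hXZ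
      have e3 : (A ^ d) ⁅X, Z⁆ = (A ^ (d + 1)) Z := by
        rw [pow_succ]
        rw [Module.End.mul_apply, hAapp]
      calc (A ^ (d + 1 + 1)) (u Z) = (A ^ (d + 1)) (A (u Z)) := e1
    _ = (-m) • ((A ^ (d + 1)) Z) - (j : ℝ) • (A ^ (d + 1)) Z := by rw [key, e2, e3]
    _ = (-(m + (j : ℝ))) • ((A ^ (d + 1)) Z) := by
        rw [neg_add, add_smul, neg_smul ((j:ℝ)), sub_eq_add_neg, neg_smul]
  -- A^2 D = 0
  have hAD : A (A D) = 0 := by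
    have h1 : A D = -X := by
      rw [hAapp, ← lie_skew, hTD.grading 1 (le_refl 1) (by omega) X hX]
      simp
    rw [h1, map_neg, hAapp, lie_self, neg_zero]
  -- A^(s-1) kills V 1
  have hV1 : ∀ Z ∈ V 1, (A ^ (s - 1)) Z = 0 := by
    obtain ⟨m, hm, hrec⟩ := hP (s - 1) le_rfl
    intro Z hZ
    have h1 : s - (s - 1) = 1 := by omega
    have h2 : s - 1 + 1 = s := by omega
    have := hrec Z (by rwa [h1])
    rw [h2] at this
    have hAsD : ∀ c : ℝ, (A ^ s) (c • D) = 0 := by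
      intro c
      rw [map_smul]
      have hss : s = s - 2 + 2 := by omega
      have : (A ^ s) D = 0 := by
        rw [hss, pow_add, Module.End.mul_apply]
        have : (A ^ 2) D = 0 := by
          rw [pow_two, Module.End.mul_apply, hAD]
        rw [this, map_zero]
      rw [this, smul_zero]
    obtain ⟨c, hc⟩ := Submodule.mem_span_singleton.mp (hu.map_first Z hZ)
    rw [← hc, hAsD] at this
    have := this.symm
    rcases smul_eq_zero.mp this with h | h
    · exact absurd h (by simp; linarith)
    · exact h
  -- upward induction kills all strata
  have hQ : ∀ j, 1 ≤ j → j ≤ s → ∀ Z ∈ V j, (A ^ (s - j)) Z = 0 := by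
    intro j h1
    induction j, h1 using Nat.le_induction with
    | base => intro _; exact hV1
    | succ j hj ih =>
      intro hjs Z hZ
      have hjs' : j ≤ s := by omega
      have huZ : u Z ∈ V j := by
        have := hu.map_strata (j + 1) (by omega) hjs Z hZ
        simpa using this
      obtain ⟨m, hm, hrec⟩ := hP (s - (j + 1)) (by omega)
      have hsj : s - (s - (j + 1)) = j + 1 := by omega
      have := hrec Z (by rwa [hsj])
      have hd1 : s - (j + 1) + 1 = s - j := by omega
      rw [hd1] at this
      rw [ih hjs' (u Z) huZ] at this
      have := this.symm
      rcases smul_eq_zero.mp this with h | h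
      · exact absurd h (by simp; linarith)
      · exact h
  -- V s = ⊥, contradiction
  apply hTD.top_ne_bot
  rw [Submodule.eq_bot_iff]
  intro z hz
  have := hQ s (by omega) le_rfl z hz
  simpa using this

/-- If `𝔤` is nonabelian (step `s ≥ 2`) and every strata-preserving derivation of `𝔤`
is a scalar multiple of the grading derivation, then every degree-one prolongation
element vanishes on `𝔤`. -/
theorem stmt1 {L : Type*} [LieRing L] [LieAlgebra ℝ L]
    (s : ℕ) (V : ℕ → Submodule ℝ L) (g : LieIdeal ℝ L) (D : L)
    (hTD : IsSemidirectTD s V g D) (hs : 2 ≤ s)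
    (hrigid : ∀ δ : L →ₗ[ℝ] L,
      (∀ X ∈ (g : Submodule ℝ L), ∀ Y ∈ (g : Submodule ℝ L),
        δ ⁅X, Y⁆ = ⁅δ X, Y⁆ + ⁅X, δ Y⁆) →
      (∀ j : ℕ, 1 ≤ j → j ≤ s → ∀ X ∈ V j, δ X ∈ V j) →
      ∃ lam : ℝ, ∀ j : ℕ, 1 ≤ j → j ≤ s → ∀ X ∈ V j, δ X = (lam * (j : ℝ)) • X)
    (u : L →ₗ[ℝ] L) (hu : IsProlongOne s V g D u) :
    ∀ X ∈ (g : Submodule ℝ L), u X = 0 := by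
  have hVg : ∀ j, V j ≤ (g : Submodule ℝ L) := by
    intro j
    rw [← hTD.sup_eq]
    exact le_iSup V j
  have huV1 : ∀ X ∈ V 1, u X = 0 := by
    intro X hX
    obtain ⟨c, hc⟩ := Submodule.mem_span_singleton.mp (hu.map_first X hX)
    have hc0 : c = 0 := by
      by_contra h
      refine prolong_contra s V g D hTD hs u hu (c⁻¹ • X) (Submodule.smul_mem _ _ hX) ?_
      rw [map_smul, ← hc, smul_smul, inv_mul_cancel₀ h, one_smul]
    rw [← hc, hc0, zero_smul]
  have hker : ∀ j, V j ≤ LinearMap.ker u := by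
    intro j
    induction j using Nat.strong_induction_on with
    | _ j ih =>
      match j, ih with
      | 0, _ => rw [hTD.eq_bot_of_notin 0 (Or.inl rfl)]; exact bot_le
      | 1, _ =>
        intro Z hZ
        rw [LinearMap.mem_ker]
        exact huV1 Z hZ
      | (j + 2), ih =>
        rcases le_or_gt (j + 2) s with hle | hlt
        · have hb := hTD.bracket_eq (j + 1) (by omega) (by omega)
          rw [show j + 1 + 1 = j + 2 from rfl] at hb
          rw [← hb]
          rw [bracketSpan, Submodule.span_le]
          rintro z ⟨y, hy, x, hx, rfl⟩
          have huy : u y = 0 := LinearMap.mem_ker.mp (ih (j + 1) (by omega) hy)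
          have hux : u x = 0 := huV1 x hx
          simp only [SetLike.mem_coe, LinearMap.mem_ker]
          rw [hu.leibniz y (hVg _ hy) x (hVg _ hx), huy, hux]
          simp
        · rw [hTD.eq_bot_of_notin (j + 2) (Or.inr hlt)]; exact bot_le
  intro X hX
  have : (g : Submodule ℝ L) ≤ LinearMap.ker u := by
    rw [← hTD.sup_eq]
    exact iSup_le hker
  exact LinearMap.mem_ker.mp (this hX)
end

section
/- Let 𝔤 be a stratified real Lie algebra and L = 𝔤 ⋊ ℝ·D_L the semidirect product of 𝔤 by its grading derivation. If Y ∈ V_1, α ∈ ℝ, and X ∈ V_1 with X ≠ 0, then (ad_{D_L − αY})^m(X) ≠ 0 for every m ∈ ℕ; consequently, no nilpotent Lie subalgebra of L contains both D_L − αY and X. -/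
open Module

/-!
Write `W = D - α • Y` and let `U = V 2 ⊕ V 3 ⊕ ⋯` be the sum of the layers of degree at
least two. Since `⁅D, X⁆ = X` and `⁅Y, X⁆ ∈ V 2`, we have `ad W X ∈ X + U`; moreover `ad W`
preserves `U`, because `ad D` acts on each layer by a scalar and `ad Y` raises the degree.
Hence `(ad W)^m X ∈ X + U` for all `m`, and this is never zero as `V 1 ∩ U = 0`.
A nilpotent subalgebra containing `W` and `X` would force `(ad W)^m X = 0` for large `m`.
-/

theorem LieSubalgebra.exists_ad_pow_apply_eq_zero {R L : Type*} [CommRing R] [LieRing L]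
    [LieAlgebra R L] (K : LieSubalgebra R L) [LieModule.IsNilpotent K K] {w x : L}
    (hw : w ∈ K) (hx : x ∈ K) : ∃ n : ℕ, (LieAlgebra.ad R L w ^ n) x = 0 := by
  obtain ⟨n, hn⟩ : IsNilpotent (LieAlgebra.ad R K ⟨w, hw⟩) :=
    LieModule.isNilpotent_toEnd_of_isNilpotent R K K _
  refine ⟨n, ?_⟩
  rw [← K.coe_ad_pow (x := ⟨w, hw⟩) (y := ⟨x, hx⟩), hn]
  rfl

def higherLayers {R M : Type*} [Semiring R] [AddCommMonoid M] [Module R M]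
    (V : ℕ → Submodule R M) : Submodule R M :=
  ⨆ k : ℕ, V (k + 2)

theorem disjoint_higherLayers {R M : Type*} [Semiring R] [AddCommMonoid M] [Module R M]
    {V : ℕ → Submodule R M} (hV : iSupIndep V) : Disjoint (V 1) (higherLayers V) :=
  (hV 1).mono_right <| iSup_le fun k => le_iSup₂_of_le (k + 2) (by omega) le_rfl

namespace IsSemidirectTD

variable {L : Type*} [LieRing L] [LieAlgebra ℝ L] {s : ℕ} {V : ℕ → Submodule ℝ L}
  {g : LieIdeal ℝ L} {D : L}

theorem lie_mem_succ_s5 (hTD : IsSemidirectTD s V g D) {j : ℕ} {Z T : L} (hZ : Z ∈ V j)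
    (hT : T ∈ V 1) : ⁅Z, T⁆ ∈ V (j + 1) := by
  by_cases hj : 1 ≤ j ∧ j ≤ s
  · rw [← hTD.bracket_eq j hj.1 hj.2]
    exact Submodule.subset_span ⟨Z, hZ, T, hT, rfl⟩
  · rw [hTD.eq_bot_of_notin j (by omega), Submodule.mem_bot] at hZ
    simp [hZ]

theorem lie_mem_succ_of_mem_one (hTD : IsSemidirectTD s V g D) {j : ℕ} {Y Z : L}
    (hY : Y ∈ V 1) (hZ : Z ∈ V j) : ⁅Y, Z⁆ ∈ V (j + 1) := by
  rw [← lie_skew]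
  exact neg_mem (hTD.lie_mem_succ_s5 hZ hY)

theorem lie_sub_smul_mem_sup_succ (hTD : IsSemidirectTD s V g D) {Y Z : L} (hY : Y ∈ V 1)
    (α : ℝ) {j : ℕ} (hZ : Z ∈ V j) : ⁅D - α • Y, Z⁆ ∈ V j ⊔ V (j + 1) := by
  rw [sub_lie, smul_lie]
  refine sub_mem ?_ (Submodule.smul_mem _ _ (Submodule.mem_sup_right
    (hTD.lie_mem_succ_of_mem_one hY hZ)))
  by_cases hj : 1 ≤ j ∧ j ≤ s
  · rw [hTD.grading j hj.1 hj.2 Z hZ]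
    exact Submodule.smul_mem _ _ (Submodule.mem_sup_left hZ)
  · rw [hTD.eq_bot_of_notin j (by omega), Submodule.mem_bot] at hZ
    simp [hZ]

theorem lie_sub_smul_mem_higherLayers (hTD : IsSemidirectTD s V g D) {Y u : L}
    (hY : Y ∈ V 1) (α : ℝ) (hu : u ∈ higherLayers V) :
    ⁅D - α • Y, u⁆ ∈ higherLayers V := by
  refine Submodule.iSup_induction (motive := fun z => ⁅D - α • Y, z⁆ ∈ higherLayers V) _ hu
    (fun k Z hZ => ?_) (by simp) (fun x y hx hy => by rw [lie_add]; exact add_mem hx hy)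
  exact sup_le (le_iSup (fun k => V (k + 2)) k) (le_iSup (fun k => V (k + 2)) (k + 1))
    (hTD.lie_sub_smul_mem_sup_succ hY α hZ)

theorem lie_sub_smul_sub_mem_higherLayers (hTD : IsSemidirectTD s V g D) {Y X : L}
    (hY : Y ∈ V 1) (α : ℝ) (hX : X ∈ V 1) : ⁅D - α • Y, X⁆ - X ∈ higherLayers V := by
  have hDX : ⁅D, X⁆ = X := by
    simpa using hTD.grading 1 le_rfl hTD.s_pos X hX
  rw [sub_lie, smul_lie, hDX, sub_sub_cancel_left]
  exact neg_mem (Submodule.smul_mem _ _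
    (le_iSup (fun k => V (k + 2)) 0 (hTD.lie_mem_succ_of_mem_one hY hX)))

theorem ad_pow_apply_sub_mem_higherLayers (hTD : IsSemidirectTD s V g D) {Y X : L}
    (hY : Y ∈ V 1) (α : ℝ) (hX : X ∈ V 1) (m : ℕ) :
    (LieAlgebra.ad ℝ L (D - α • Y) ^ m) X - X ∈ higherLayers V := by
  induction m with
  | zero => simp
  | succ m ih =>
    have hstep : (LieAlgebra.ad ℝ L (D - α • Y) ^ (m + 1)) X - X =
        ⁅D - α • Y, (LieAlgebra.ad ℝ L (D - α • Y) ^ m) X - X⁆ + (⁅D - α • Y, X⁆ - X) := by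
      rw [pow_succ', Module.End.mul_apply, LieAlgebra.ad_apply, lie_sub]
      abel
    rw [hstep]
    exact add_mem (hTD.lie_sub_smul_mem_higherLayers hY α ih)
      (hTD.lie_sub_smul_sub_mem_higherLayers hY α hX)

theorem ad_pow_apply_ne_zero (hTD : IsSemidirectTD s V g D) {Y X : L} (hY : Y ∈ V 1)
    (α : ℝ) (hX : X ∈ V 1) (hX0 : X ≠ 0) (m : ℕ) :
    (LieAlgebra.ad ℝ L (D - α • Y) ^ m) X ≠ 0 := by
  intro h
  have hXU := hTD.ad_pow_apply_sub_mem_higherLayers hY α hX m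
  rw [h, zero_sub] at hXU
  exact hX0 (Submodule.disjoint_def.mp (disjoint_higherLayers hTD.independent) X hX
    (neg_mem_iff.mp hXU))

end IsSemidirectTD

/-- For `Y, X ∈ V 1`, `X ≠ 0`, and `α ∈ ℝ`, the iterated brackets
`(ad (D - αY))^m X` never vanish; hence no nilpotent Lie subalgebra of `L`
contains both `D - αY` and `X`. -/
theorem stmt5 {L : Type*} [LieRing L] [LieAlgebra ℝ L]
    (s : ℕ) (V : ℕ → Submodule ℝ L) (g : LieIdeal ℝ L) (D : L)
    (hTD : IsSemidirectTD s V g D)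
    (Y : L) (hY : Y ∈ V 1) (α : ℝ) (X : L) (hX : X ∈ V 1) (hX0 : X ≠ 0) :
    (∀ m : ℕ, ((LieAlgebra.ad ℝ L (D - α • Y)) ^ m) X ≠ 0) ∧
    ∀ K : LieSubalgebra ℝ L, (∃ k : ℕ, LieModule.lowerCentralSeries ℝ K K k = ⊥) →
      ¬(D - α • Y ∈ K ∧ X ∈ K) := by
  refine ⟨hTD.ad_pow_apply_ne_zero hY α hX hX0, ?_⟩
  rintro K ⟨k, hk⟩ ⟨hWK, hXK⟩
  have : LieModule.IsNilpotent K K := (LieModule.isNilpotent_iff ℝ K K).mpr ⟨k, hk⟩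
  obtain ⟨n, hn⟩ := K.exists_ad_pow_apply_eq_zero hWK hXK
  exact hTD.ad_pow_apply_ne_zero hY α hX hX0 n hn
end

section
/- Let 𝔤 be a stratified real Lie algebra, L = 𝔤 ⋊ ℝ·D_L the semidirect product of 𝔤 by its grading derivation, and u : 𝔤 → L a degree-one prolongation element with associated functional c : V_1 → ℝ. If Z lies in the centre of 𝔤 and Z ∈ V_k for some 1 ≤ k ≤ s, then for every X ∈ V_1 and every 1 ≤ j ≤ k one has [X, u^j(Z)] = −c(X)·(j(2k − j + 1)/2)·u^{j−1}(Z). -/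
open Module

/-- If `Z` is central in `𝔤` and `Z ∈ V k`, then for `1 ≤ j ≤ k` and `X ∈ V 1`,
`⁅X, u^j Z⁆ = -c(X) · (j(2k - j + 1)/2) · u^(j-1) Z`. -/
theorem stmt7 {L : Type*} [LieRing L] [LieAlgebra ℝ L]
    (s : ℕ) (V : ℕ → Submodule ℝ L) (g : LieIdeal ℝ L) (D : L)
    (hTD : IsSemidirectTD s V g D)
    (u : L →ₗ[ℝ] L) (hu : IsProlongOne s V g D u)
    (c : L → ℝ) (hc : ∀ X ∈ V 1, u X = c X • D)
    (k : ℕ) (hk1 : 1 ≤ k) (hks : k ≤ s)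
    (Z : L) (hZ : Z ∈ V k)
    (hZcentral : ∀ W ∈ (g : Submodule ℝ L), ⁅Z, W⁆ = 0) :
    ∀ j : ℕ, 1 ≤ j → j ≤ k → ∀ X ∈ V 1,
      ⁅X, (u ^ j) Z⁆
        = (-(c X) * ((j : ℝ) * (2 * (k : ℝ) - (j : ℝ) + 1) / 2)) • ((u ^ (j - 1)) Z) := by
  have hVg : ∀ n, V n ≤ (g : Submodule ℝ L) := fun n => hTD.sup_eq ▸ le_iSup V n
  have hmem : ∀ i, i ≤ k - 1 → (u ^ i) Z ∈ V (k - i) := by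
    intro i
    induction i with
    | zero => intro _; simpa using hZ
    | succ n ih =>
      intro hn
      have h1 := ih (by omega)
      have h4 := hu.map_strata (k - n) (by omega) (by omega) _ h1
      have h5 : (u ^ (n+1)) Z = u ((u ^ n) Z) := by
        rw [pow_succ', Module.End.mul_apply]
      rw [h5, show k - (n+1) = k - n - 1 by omega]
      exact h4
  intro j hj1
  induction j, hj1 using Nat.le_induction with
  | base =>
    intro _ X hX
    have hXg : X ∈ (g : Submodule ℝ L) := hVg 1 hX
    have hZg : Z ∈ (g : Submodule ℝ L) := hVg k hZ
    have hlieb := hu.leibniz X hXg Z hZg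
    have hXZ : ⁅X, Z⁆ = 0 := by
      rw [← lie_skew, hZcentral X hXg, neg_zero]
    rw [hXZ, map_zero] at hlieb
    have h := eq_neg_of_add_eq_zero_right hlieb.symm
    rw [pow_one, h, hc X hX, smul_lie, hTD.grading k hk1 hks Z hZ,
      smul_smul, ← neg_smul]
    norm_num
  | succ n hn ih =>
    intro hnk X hX
    have hW : (u ^ n) Z ∈ V (k - n) := hmem n (by omega)
    have hWg : (u ^ n) Z ∈ (g : Submodule ℝ L) := hVg _ hW
    have hXg : X ∈ (g : Submodule ℝ L) := hVg 1 hX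
    have hlieb := hu.leibniz X hXg _ hWg
    have hgr := hTD.grading (k - n) (by omega) (by omega) _ hW
    have hprev := ih (by omega) X hX
    have hstep : u ((u ^ (n-1)) Z) = (u ^ n) Z := by
      rw [← Module.End.mul_apply, ← pow_succ', show n - 1 + 1 = n by omega]
    have hpow : u ((u ^ n) Z) = (u ^ (n+1)) Z := by
      rw [← Module.End.mul_apply, ← pow_succ']
    have hL : u ⁅X, (u ^ n) Z⁆
        = (-(c X) * ((n : ℝ) * (2 * (k : ℝ) - (n : ℝ) + 1) / 2)) • ((u ^ n) Z) := by
      rw [hprev, map_smul, hstep]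
    rw [hL, hc X hX, smul_lie, hgr, hpow, smul_smul] at hlieb
    have hcast : ((k - n : ℕ) : ℝ) = (k : ℝ) - (n : ℝ) :=
      Nat.cast_sub (by omega : n ≤ k)
    rw [hcast] at hlieb
    rw [show n + 1 - 1 = n by omega, eq_sub_of_add_eq' hlieb.symm, ← sub_smul]
    congr 1
    push_cast
    ring
end

section
/- Let 𝔤 be a stratified real Lie algebra, L = 𝔤 ⋊ ℝ·D_L the semidirect product of 𝔤 by its grading derivation, and u : 𝔤 → L a degree-one prolongation element with associated functional c : V_1 → ℝ. If Z lies in the centre of 𝔤 and Z ∈ V_k for some 1 ≤ k ≤ s, then for every X ∈ V_1 one has (ad_X)^k(u^k(Z)) = (−1)^k · (∏_{j=1}^{k} j(2k − j + 1)/2) · c(X)^k · Z; in particular (ad_X)^k(u^k(Z)) = A_k · c(X)^k · Z for a nonzero constant A_k depending only on k. -/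
open Module

/-- If `Z` is central in `𝔤` and `Z ∈ V k`, then for every `X ∈ V 1`,
`(ad X)^k (u^k Z) = (-1)^k · (∏_{j=1}^k j(2k-j+1)/2) · c(X)^k · Z`, and the
constant `A k = (-1)^k · ∏_{j=1}^k j(2k-j+1)/2`, depending only on `k`, is nonzero. -/
theorem stmt8 {L : Type*} [LieRing L] [LieAlgebra ℝ L]
    (s : ℕ) (V : ℕ → Submodule ℝ L) (g : LieIdeal ℝ L) (D : L)
    (hTD : IsSemidirectTD s V g D)
    (u : L →ₗ[ℝ] L) (hu : IsProlongOne s V g D u)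
    (c : L → ℝ) (hc : ∀ X ∈ V 1, u X = c X • D)
    (k : ℕ) (hk1 : 1 ≤ k) (hks : k ≤ s)
    (Z : L) (hZ : Z ∈ V k)
    (hZcentral : ∀ W ∈ (g : Submodule ℝ L), ⁅Z, W⁆ = 0) :
    ((-1 : ℝ) ^ k * ∏ j ∈ Finset.Icc 1 k, ((j : ℝ) * (2 * (k : ℝ) - (j : ℝ) + 1) / 2)) ≠ 0 ∧
    ∀ X ∈ V 1,
      ((LieAlgebra.ad ℝ L X) ^ k) ((u ^ k) Z)
        = (((-1 : ℝ) ^ k * ∏ j ∈ Finset.Icc 1 k,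
              ((j : ℝ) * (2 * (k : ℝ) - (j : ℝ) + 1) / 2)) * (c X) ^ k) • Z := by
  classical
  have b : ℕ → ℝ := fun j => (j : ℝ) * (2 * (k : ℝ) - (j : ℝ) + 1) / 2
  constructor
  · apply mul_ne_zero (pow_ne_zero _ (by norm_num))
    apply ne_of_gt
    apply Finset.prod_pos
    intro j hj
    obtain ⟨hj1, hjk⟩ := Finset.mem_Icc.mp hj
    have h1 : (1:ℝ) ≤ (j:ℝ) := by exact_mod_cast hj1
    have h2 : (j:ℝ) ≤ (k:ℝ) := by exact_mod_cast hjk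
    have : (0:ℝ) < (j:ℝ) * (2 * (k:ℝ) - (j:ℝ) + 1) := by nlinarith
    linarith
  intro X hX
  set b : ℕ → ℝ := fun j => (j : ℝ) * (2 * (k : ℝ) - (j : ℝ) + 1) / 2 with hbdef
  have hVg : ∀ j, V j ≤ (g : Submodule ℝ L) := fun j => (le_iSup V j).trans hTD.sup_eq.le
  have hXg : X ∈ (g : Submodule ℝ L) := hVg 1 hX
  have huX : u X = c X • D := hc X hX
  -- membership of iterates
  have memV : ∀ i, i < k → (u ^ i) Z ∈ V (k - i) := by
    intro i
    induction i with
    | zero => intro _; simpa using hZ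
    | succ n ih =>
      intro hn
      have hmem := ih (Nat.lt_of_succ_lt hn)
      have h2 : 2 ≤ k - n := by omega
      have hs' : k - n ≤ s := by omega
      have := hu.map_strata (k - n) h2 hs' _ hmem
      have hidx : k - n - 1 = k - (n + 1) := by omega
      rw [hidx] at this
      rw [pow_succ']
      exact this
  -- the bracket recurrence
  have hbrack : ∀ i, 1 ≤ i → i ≤ k →
      ⁅X, (u ^ i) Z⁆ = (-(b i) * c X) • (u ^ (i - 1)) Z := by
    intro i hi
    induction i, hi using Nat.le_induction with
    | base =>
      intro _
      have hZg : Z ∈ (g : Submodule ℝ L) := hVg k hZ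
      have hXZ : ⁅X, Z⁆ = (0 : L) := by
        rw [← lie_skew, hZcentral X hXg, neg_zero]
      have hleib := hu.leibniz X hXg Z hZg
      rw [hXZ, map_zero] at hleib
      have hDZ : ⁅D, Z⁆ = (k : ℝ) • Z := hTD.grading k hk1 hks Z hZ
      rw [huX, smul_lie, hDZ] at hleib
      have hXuZ : ⁅X, u Z⁆ = -(c X • (k:ℝ) • Z) := by
        rw [eq_neg_iff_add_eq_zero, add_comm]
        exact hleib.symm
      have hb1 : b 1 = (k : ℝ) := by
        simp only [hbdef]
        push_cast
        ring
      rw [pow_one, hXuZ]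
      simp only [Nat.sub_self, pow_zero, Module.End.one_apply, hb1]
      rw [smul_smul]
      module
    | succ n hn ih =>
      intro hnk
      have hnk' : n ≤ k := by omega
      have hnlt : n < k := by omega
      have ihn := ih hnk'
      have hmem : (u ^ n) Z ∈ V (k - n) := memV n hnlt
      have hng : (u ^ n) Z ∈ (g : Submodule ℝ L) := hVg _ hmem
      have hleib := hu.leibniz X hXg _ hng
      rw [ihn, map_smul, huX, smul_lie] at hleib
      have hDun : ⁅D, (u ^ n) Z⁆ = ((k - n : ℕ) : ℝ) • (u ^ n) Z :=
        hTD.grading (k - n) (by omega) (by omega) _ hmem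
      rw [hDun] at hleib
      have hun : u ((u ^ (n - 1)) Z) = (u ^ n) Z := by
        conv_rhs => rw [show n = (n - 1) + 1 by omega, pow_succ']
        rfl
      rw [hun] at hleib
      -- hleib : (-(b n) * c X) • (u ^ n) Z = c X • (↑(k-n) • (u^n) Z) + ⁅X, u ((u^n) Z)⁆
      have hXsucc : ⁅X, u ((u ^ n) Z)⁆
          = ((-(b n) * c X) - c X * ((k - n : ℕ) : ℝ)) • (u ^ n) Z := by
        have h := eq_sub_of_add_eq' hleib.symm
        rw [h, smul_smul, ← sub_smul]
      have hu1 : (u ^ (n + 1)) Z = u ((u ^ n) Z) := by rw [pow_succ']; rfl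
      have hcast : ((k - n : ℕ) : ℝ) = (k : ℝ) - (n : ℝ) := by
        push_cast [Nat.cast_sub hnk']
        ring
      have hbrec : (-(b n) * c X) - c X * ((k - n : ℕ) : ℝ) = -(b (n + 1)) * c X := by
        rw [hcast]
        simp only [hbdef]
        push_cast
        ring
      rw [hu1, hXsucc, hbrec]
      simp
  -- iterating ad X
  have hadpow : ∀ m, m ≤ k →
      ((LieAlgebra.ad ℝ L X) ^ m) ((u ^ k) Z)
        = (∏ j ∈ Finset.Icc (k - m + 1) k, (-(b j) * c X)) • (u ^ (k - m)) Z := by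
    intro m
    induction m with
    | zero =>
      intro _
      rw [Finset.Icc_eq_empty (by omega), Finset.prod_empty, one_smul]
      simp
    | succ n ih =>
      intro hn
      have hn' : n ≤ k := by omega
      have h1 : 1 ≤ k - n := by omega
      have h2 : k - n ≤ k := by omega
      rw [pow_succ', Module.End.mul_apply, ih hn', map_smul]
      have hb' := hbrack (k - n) h1 h2
      rw [LieAlgebra.ad_apply, hb', smul_smul]
      have hset : Finset.Icc (k - (n+1) + 1) k = Finset.Icc (k - n) k := by
        congr 1; omega
      have hidx : k - n - 1 = k - (n + 1) := by omega
      rw [hidx, hset]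
      have hsplit : ∏ j ∈ Finset.Icc (k - n) k, (-(b j) * c X)
          = (-(b (k - n)) * c X) * ∏ j ∈ Finset.Icc (k - n + 1) k, (-(b j) * c X) := by
        rw [← Finset.Ico_add_one_right_eq_Icc, ← Finset.Ico_add_one_right_eq_Icc,
          Finset.prod_eq_prod_Ico_succ_bot (by omega)]
      rw [hsplit]
      congr 1
      ring
  have hfin := hadpow k le_rfl
  have hicc : Finset.Icc (k - k + 1) k = Finset.Icc 1 k := by congr 1; omega
  rw [hicc, Nat.sub_self, pow_zero, Module.End.one_apply] at hfin
  rw [hfin]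
  congr 1
  calc ∏ j ∈ Finset.Icc 1 k, (-(b j) * c X)
      = ∏ j ∈ Finset.Icc 1 k, (((-1:ℝ) * b j) * c X) := by
        apply Finset.prod_congr rfl; intros; ring
    _ = (∏ j ∈ Finset.Icc 1 k, ((-1:ℝ) * b j)) * ∏ j ∈ Finset.Icc 1 k, c X :=
        Finset.prod_mul_distrib
    _ = ((∏ j ∈ Finset.Icc 1 k, (-1:ℝ)) * ∏ j ∈ Finset.Icc 1 k, b j)
          * ∏ j ∈ Finset.Icc 1 k, c X := by rw [Finset.prod_mul_distrib]
    _ = (-1:ℝ) ^ k * (∏ j ∈ Finset.Icc 1 k, b j) * (c X) ^ k := by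
        rw [Finset.prod_const, Finset.prod_const, Nat.card_Icc]
        simp [Nat.add_sub_cancel, mul_assoc]
end

section
/- The listed bracket relations on the basis e_1,…,e_16 of ℝ^16, extended bilinearly and antisymmetrically (with all unlisted brackets of basis elements equal to zero), satisfy the Jacobi identity and hence define a real Lie algebra 𝔤; moreover 𝔤 = V_1 ⊕ V_2 is a stratification of step 2, i.e. [V_1, V_1] = V_2 and [V_2, 𝔤] = 0. -/
/-! Every listed relation brackets two of `e_1, …, e_10` into one of `e_11, …, e_16`. Hence all
brackets lie in `V_2`, and a bracket vanishes as soon as one argument lies in `V_2`; so every double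
bracket is zero and the Jacobi identity holds trivially. Antisymmetry is built into `sc`, and
`V_2 ⊆ [V_1, V_1]` is witnessed by `[e_1, e_2] = e_11`, `[e_2, e_5] = e_12` and
`[e_1, e_j] = e_{j+10}` for `3 ≤ j ≤ 6`. -/

open Module

/-- The listed bracket relations: `(i, j, k, a)` means `[e_i, e_j] = a • e_k`
(1-based indices). -/
def relList : List (ℕ × ℕ × ℕ × ℝ) :=
  [(1,2,11,1), (1,3,13,1), (1,4,14,1), (1,5,15,1), (1,6,16,1),
   (2,3,13,1), (2,5,12,1), (2,6,14,1),
   (3,5,12,1), (3,6,13,1), (3,7,14,1),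
   (4,5,12,1), (4,6,13,1), (4,8,14,1),
   (5,6,13,1), (5,8,12,1), (5,9,14,1),
   (6,8,12,1), (6,9,13,1), (6,10,14,1),
   (7,8,14,1), (7,9,12,1), (7,10,13,1),
   (8,9,13,1), (8,10,14,1), (9,10,12,-1)]

/-- Structure constants determined by a relation list, extended antisymmetrically:
`sc rels i j k` is the coefficient of `e_k` in `[e_i, e_j]` (1-based indices). -/
noncomputable def sc (rels : List (ℕ × ℕ × ℕ × ℝ)) (i j k : ℕ) : ℝ :=
  ((rels.filter (fun r => r.1 = i ∧ r.2.1 = j ∧ r.2.2.1 = k)).map (fun r => r.2.2.2)).sum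
  - ((rels.filter (fun r => r.1 = j ∧ r.2.1 = i ∧ r.2.2.1 = k)).map (fun r => r.2.2.2)).sum

/-- The bilinear bracket on `ℝ^n` determined by the structure constants `sc rels`. -/
noncomputable def bra {n : ℕ} (rels : List (ℕ × ℕ × ℕ × ℝ)) (x y : Fin n → ℝ) :
    Fin n → ℝ :=
  fun k => ∑ i, ∑ j, x i * y j * sc rels (i.val + 1) (j.val + 1) (k.val + 1)

/-- `e i` is the `i`-th standard basis vector of `ℝ^n` (1-based index). -/
noncomputable def e {n : ℕ} (i : ℕ) : Fin n → ℝ := fun k => if k.val + 1 = i then 1 else 0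

/-- The span of all brackets `bra rels x y` with `x ∈ A` and `y ∈ B`. -/
noncomputable def braSpan {n : ℕ} (rels : List (ℕ × ℕ × ℕ × ℝ))
    (A B : Submodule ℝ (Fin n → ℝ)) : Submodule ℝ (Fin n → ℝ) :=
  Submodule.span ℝ {z | ∃ x ∈ A, ∃ y ∈ B, bra rels x y = z}

/-- The strata `V_1 = span{e_1, …, e_10}` and `V_2 = span{e_11, …, e_16}`. -/
noncomputable def V1 : Submodule ℝ (Fin 16 → ℝ) := Submodule.span ℝ (e '' {i | 1 ≤ i ∧ i ≤ 10})
noncomputable def V2 : Submodule ℝ (Fin 16 → ℝ) := Submodule.span ℝ (e '' {i | 11 ≤ i ∧ i ≤ 16})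

lemma sc_swap (rels : List (ℕ × ℕ × ℕ × ℝ)) (i j k : ℕ) : sc rels j i k = -sc rels i j k := by
  rw [sc, sc, neg_sub]

lemma bra_swap {n : ℕ} (rels : List (ℕ × ℕ × ℕ × ℝ)) (x y : Fin n → ℝ) :
    bra rels y x = -bra rels x y := by
  funext k
  simp only [bra, Pi.neg_apply, ← Finset.sum_neg_distrib]
  rw [Finset.sum_comm]
  refine Finset.sum_congr rfl fun i _ => Finset.sum_congr rfl fun j _ => ?_
  rw [sc_swap]; ring

lemma bra_e_e {n : ℕ} (rels : List (ℕ × ℕ × ℕ × ℝ)) {a b : ℕ} (ha : 1 ≤ a ∧ a ≤ n)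
    (hb : 1 ≤ b ∧ b ≤ n) : bra rels (e a) (e b) = fun k : Fin n => sc rels a b (k.val + 1) := by
  obtain ⟨i, rfl⟩ : ∃ i : Fin n, i.val + 1 = a := ⟨⟨a - 1, by omega⟩, by simp only; omega⟩
  obtain ⟨j, rfl⟩ : ∃ j : Fin n, j.val + 1 = b := ⟨⟨b - 1, by omega⟩, by simp only; omega⟩
  funext k
  simp [bra, e, ← Fin.ext_iff]

lemma mem_span_e_iff {n : ℕ} (S : Set ℕ) (x : Fin n → ℝ) :
    x ∈ Submodule.span ℝ (e '' S) ↔ ∀ k : Fin n, k.val + 1 ∉ S → x k = 0 := by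
  constructor
  · intro hx
    induction hx using Submodule.span_induction with
    | mem z hz =>
      obtain ⟨i, hi, rfl⟩ := hz
      intro k hk
      exact if_neg fun (h : k.val + 1 = i) => hk (h ▸ hi)
    | zero => simp
    | add a b _ _ ha hb => intro k hk; simp [ha k hk, hb k hk]
    | smul r a _ ha => intro k hk; simp [ha k hk]
  · intro hx
    rw [pi_eq_sum_univ x]
    refine Submodule.sum_mem _ fun k _ => ?_
    by_cases hk : k.val + 1 ∈ S
    · refine Submodule.smul_mem _ _ (Submodule.subset_span ⟨k.val + 1, hk, ?_⟩)
      funext j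
      simp [e, Fin.val_inj, eq_comm]
    · simp [hx k hk]

def IsTwoStepAt (m : ℕ) (rels : List (ℕ × ℕ × ℕ × ℝ)) : Prop :=
  ∀ r ∈ rels, r.1 ≤ m ∧ r.2.1 ≤ m ∧ m < r.2.2.1

namespace IsTwoStepAt

variable {m n : ℕ} {rels : List (ℕ × ℕ × ℕ × ℝ)}

lemma sc_eq_zero (h : IsTwoStepAt m rels) {i j k : ℕ} (hijk : m < i ∨ m < j ∨ k ≤ m) :
    sc rels i j k = 0 := by
  rw [sc, List.filter_eq_nil_iff.mpr, List.filter_eq_nil_iff.mpr, List.map_nil, sub_self]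
  all_goals
    intro r hr
    have := h r hr
    simp only [decide_eq_true_eq]
    omega

lemma bra_apply_eq_zero (h : IsTwoStepAt m rels) (x y : Fin n → ℝ) {k : Fin n}
    (hk : k.val < m) : bra rels x y k = 0 :=
  Finset.sum_eq_zero fun i _ => Finset.sum_eq_zero fun j _ => by
    rw [h.sc_eq_zero (by omega), mul_zero]

lemma bra_eq_zero_of_left (h : IsTwoStepAt m rels) {x : Fin n → ℝ}
    (hx : ∀ i : Fin n, i.val < m → x i = 0) (y : Fin n → ℝ) : bra rels x y = 0 := by
  funext k
  refine Finset.sum_eq_zero fun i _ => Finset.sum_eq_zero fun j _ => ?_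
  rcases lt_or_ge i.val m with hi | hi
  · rw [hx i hi, zero_mul, zero_mul]
  · rw [h.sc_eq_zero (by omega), mul_zero]

lemma bra_bra_eq_zero (h : IsTwoStepAt m rels) (x y z : Fin n → ℝ) :
    bra rels x (bra rels y z) = 0 := by
  rw [bra_swap, h.bra_eq_zero_of_left (fun _ => h.bra_apply_eq_zero y z), neg_zero]

lemma jacobi (h : IsTwoStepAt m rels) (x y z : Fin n → ℝ) :
    bra rels x (bra rels y z) + bra rels y (bra rels z x) + bra rels z (bra rels x y) = 0 := by
  simp only [h.bra_bra_eq_zero, add_zero]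

end IsTwoStepAt

lemma isTwoStepAt_relList : IsTwoStepAt 10 relList := by
  unfold IsTwoStepAt; decide

lemma mem_V1_iff (x : Fin 16 → ℝ) : x ∈ V1 ↔ ∀ k : Fin 16, 10 ≤ k.val → x k = 0 := by
  rw [V1, mem_span_e_iff]
  exact forall_congr' fun k => imp_congr_left (by simp only [Set.mem_ofPred_eq]; omega)

lemma mem_V2_iff (x : Fin 16 → ℝ) : x ∈ V2 ↔ ∀ k : Fin 16, k.val < 10 → x k = 0 := by
  rw [V2, mem_span_e_iff]
  exact forall_congr' fun k => imp_congr_left (by simp only [Set.mem_ofPred_eq]; omega)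

lemma V1_sup_V2 : V1 ⊔ V2 = ⊤ := by
  refine eq_top_iff.mpr fun x _ => Submodule.mem_sup.mpr ?_
  refine ⟨fun k => if k.val < 10 then x k else 0, (mem_V1_iff _).mpr fun k hk => ?_,
    fun k => if k.val < 10 then 0 else x k, (mem_V2_iff _).mpr fun k hk => if_pos hk, ?_⟩
  · exact if_neg (by omega)
  · funext k
    by_cases hk : k.val < 10 <;> simp [hk]

lemma V1_inf_V2 : V1 ⊓ V2 = ⊥ := by
  refine eq_bot_iff.mpr fun x ⟨hx₁, hx₂⟩ => (Submodule.mem_bot ℝ).mpr (funext fun k => ?_)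
  rcases lt_or_ge k.val 10 with hk | hk
  · exact (mem_V2_iff x).mp hx₂ k hk
  · exact (mem_V1_iff x).mp hx₁ k hk

lemma V2_ne_bot : V2 ≠ ⊥ := by
  have he : (e 11 : Fin 16 → ℝ) ∈ V2 := Submodule.subset_span ⟨11, by norm_num, rfl⟩
  refine fun hV => one_ne_zero (congrFun ((Submodule.mem_bot ℝ).mp (hV ▸ he)) (10 : Fin 16))

lemma e_mem_braSpan_V1_V1 {a b m : ℕ} (ha : 1 ≤ a ∧ a ≤ 10) (hb : 1 ≤ b ∧ b ≤ 10)
    (hsc : ∀ k : Fin 16, sc relList a b (k.val + 1) = e m k) :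
    (e m : Fin 16 → ℝ) ∈ braSpan relList V1 V1 := by
  refine Submodule.subset_span ⟨e a, Submodule.subset_span ⟨a, ha, rfl⟩,
    e b, Submodule.subset_span ⟨b, hb, rfl⟩, ?_⟩
  rw [bra_e_e relList (by omega) (by omega)]
  exact funext hsc

set_option maxHeartbeats 800000 in
lemma braSpan_V1_V1 : braSpan relList V1 V1 = V2 := by
  refine le_antisymm (Submodule.span_le.mpr ?_) (Submodule.span_le.mpr ?_)
  · rintro _ ⟨x, -, y, -, rfl⟩
    exact (mem_V2_iff _).mpr fun k hk => isTwoStepAt_relList.bra_apply_eq_zero x y hk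
  · rintro _ ⟨m, ⟨hm₁, hm₂⟩, rfl⟩
    interval_cases m
    · refine e_mem_braSpan_V1_V1 (a := 1) (b := 2) (by norm_num) (by norm_num) ?_
      intro k; fin_cases k <;> norm_num [sc, relList, e]
    · refine e_mem_braSpan_V1_V1 (a := 2) (b := 5) (by norm_num) (by norm_num) ?_
      intro k; fin_cases k <;> norm_num [sc, relList, e]
    · refine e_mem_braSpan_V1_V1 (a := 1) (b := 3) (by norm_num) (by norm_num) ?_
      intro k; fin_cases k <;> norm_num [sc, relList, e]
    · refine e_mem_braSpan_V1_V1 (a := 1) (b := 4) (by norm_num) (by norm_num) ?_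
      intro k; fin_cases k <;> norm_num [sc, relList, e]
    · refine e_mem_braSpan_V1_V1 (a := 1) (b := 5) (by norm_num) (by norm_num) ?_
      intro k; fin_cases k <;> norm_num [sc, relList, e]
    · refine e_mem_braSpan_V1_V1 (a := 1) (b := 6) (by norm_num) (by norm_num) ?_
      intro k; fin_cases k <;> norm_num [sc, relList, e]

lemma braSpan_V2_top : braSpan relList V2 ⊤ = ⊥ := by
  refine eq_bot_iff.mpr (Submodule.span_le.mpr ?_)
  rintro _ ⟨x, hx, y, -, rfl⟩
  exact isTwoStepAt_relList.bra_eq_zero_of_left ((mem_V2_iff x).mp hx) y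

/-- The listed bracket relations define a Lie algebra structure on `ℝ^16`
(antisymmetry and the Jacobi identity hold), and `V_1 ⊕ V_2` is a stratification
of step 2: `[V_1, V_1] = V_2` and `[V_2, 𝔤] = 0`. -/
theorem stmt11 :
    (∀ x y : Fin 16 → ℝ, bra relList x y = - bra relList y x) ∧
    (∀ x y z : Fin 16 → ℝ,
      bra relList x (bra relList y z) + bra relList y (bra relList z x)
        + bra relList z (bra relList x y) = 0) ∧
    V1 ⊔ V2 = ⊤ ∧ V1 ⊓ V2 = ⊥ ∧ V2 ≠ ⊥ ∧
    braSpan relList V1 V1 = V2 ∧ braSpan relList V2 ⊤ = ⊥ :=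
  ⟨fun x y => bra_swap relList y x, isTwoStepAt_relList.jacobi, V1_sup_V2, V1_inf_V2, V2_ne_bot,
    braSpan_V1_V1, braSpan_V2_top⟩
end

section
/- The listed bracket relations on the basis e_1,…,e_16 of ℝ^16, extended bilinearly and antisymmetrically (with all unlisted brackets of basis elements equal to zero), satisfy the Jacobi identity and hence define a real Lie algebra 𝔥; the lower central series of 𝔥 satisfies C^2(𝔥) = span{e_11,…,e_16}, C^3(𝔥) = span{e_14}, and C^4(𝔥) = 0, so 𝔥 is nilpotent of nilpotency class exactly 3; in particular 𝔥 is not isomorphic to the 2-step Lie algebra obtained by omitting the bracket [e_1,e_11]=e_14. -/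
open Module

/-- The relation list of the deformed (non-stratified) 16-dimensional algebra `𝔥`:
the relations of `𝔤` together with the additional bracket `[e_1, e_11] = e_14`. -/
def relListH : List (ℕ × ℕ × ℕ × ℝ) := relList ++ [(1,11,14,1)]

/-- The lower central series of `𝔥`: `C 0 = 𝔥 = C^1` and `C (n+1) = [𝔥, C n]`,
so `C (k-1)` is the term `C^k` of the paper. -/
noncomputable def C : ℕ → Submodule ℝ (Fin 16 → ℝ)
  | 0 => ⊤
  | n + 1 => braSpan relListH ⊤ (C n)

def relListZG : List (ℕ × ℕ × ℕ × ℤ) :=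
  [(1,2,11,1), (1,3,13,1), (1,4,14,1), (1,5,15,1), (1,6,16,1),
   (2,3,13,1), (2,5,12,1), (2,6,14,1),
   (3,5,12,1), (3,6,13,1), (3,7,14,1),
   (4,5,12,1), (4,6,13,1), (4,8,14,1),
   (5,6,13,1), (5,8,12,1), (5,9,14,1),
   (6,8,12,1), (6,9,13,1), (6,10,14,1),
   (7,8,14,1), (7,9,12,1), (7,10,13,1),
   (8,9,13,1), (8,10,14,1), (9,10,12,-1)]

def relListZH : List (ℕ × ℕ × ℕ × ℤ) := relListZG ++ [(1,11,14,1)]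

def scZ (rels : List (ℕ × ℕ × ℕ × ℤ)) (i j k : ℕ) : ℤ :=
  ((rels.filter (fun r => r.1 = i ∧ r.2.1 = j ∧ r.2.2.1 = k)).map (fun r => r.2.2.2)).sum
  - ((rels.filter (fun r => r.1 = j ∧ r.2.1 = i ∧ r.2.2.1 = k)).map (fun r => r.2.2.2)).sum

lemma sc_cast (l : List (ℕ × ℕ × ℕ × ℤ)) (i j k : ℕ) :
    sc (l.map fun r => (r.1, r.2.1, r.2.2.1, (r.2.2.2 : ℝ))) i j k = (scZ l i j k : ℝ) := by
  simp [sc, scZ, List.filter_map, List.map_map, Function.comp_def]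

lemma relList_eq : relList = relListZG.map fun r => (r.1, r.2.1, r.2.2.1, (r.2.2.2 : ℝ)) := by
  norm_num [relList, relListZG]

lemma relListH_eq : relListH = relListZH.map fun r => (r.1, r.2.1, r.2.2.1, (r.2.2.2 : ℝ)) := by
  norm_num [relListH, relList, relListZH, relListZG]

lemma scH (i j k : ℕ) : sc relListH i j k = (scZ relListZH i j k : ℝ) := by
  rw [relListH_eq, sc_cast]

lemma scG (i j k : ℕ) : sc relList i j k = (scZ relListZG i j k : ℝ) := by
  rw [relList_eq, sc_cast]

lemma sc_anti (rels : List (ℕ × ℕ × ℕ × ℝ)) (i j k : ℕ) : sc rels i j k = - sc rels j i k := by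
  simp [sc]

set_option maxRecDepth 10000 in
lemma factA : ∀ j k : Fin 16, ∀ m : Fin 10, scZ relListZH (j.val+1) (k.val+1) (m.val+1) = 0 := by
  decide
set_option maxRecDepth 10000 in
lemma factB : ∀ i l : Fin 16, ∀ m : Fin 6, scZ relListZH (i.val+1) (m.val+11) (l.val+1)
    = if i.val = 0 ∧ m.val = 0 ∧ l.val = 13 then 1 else 0 := by decide
set_option maxRecDepth 10000 in
lemma factBG : ∀ i l : Fin 16, ∀ m : Fin 6, scZ relListZG (i.val+1) (m.val+11) (l.val+1) = 0 := by
  decide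
set_option maxRecDepth 10000 in
lemma factAG : ∀ j k : Fin 16, ∀ m : Fin 10, scZ relListZG (j.val+1) (k.val+1) (m.val+1) = 0 := by
  decide
lemma factC : ∀ j k : Fin 16, scZ relListZH (j.val+1) (k.val+1) 11
    = (if j.val = 0 ∧ k.val = 1 then 1 else 0) - (if j.val = 1 ∧ k.val = 0 then 1 else 0) := by
  decide
lemma fact12 : ∀ k : Fin 16, scZ relListZH 1 2 (k.val+1) = if k.val = 10 then 1 else 0 := by decide
lemma fact1_11 : ∀ k : Fin 16, scZ relListZH 1 11 (k.val+1) = if k.val = 13 then 1 else 0 := by decide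
lemma fact13 : ∀ k : Fin 16, scZ relListZH 1 3 (k.val+1) = if k.val = 12 then 1 else 0 := by decide
lemma fact14 : ∀ k : Fin 16, scZ relListZH 1 4 (k.val+1) = if k.val = 13 then 1 else 0 := by decide
lemma fact15 : ∀ k : Fin 16, scZ relListZH 1 5 (k.val+1) = if k.val = 14 then 1 else 0 := by decide
lemma fact16 : ∀ k : Fin 16, scZ relListZH 1 6 (k.val+1) = if k.val = 15 then 1 else 0 := by decide
lemma fact25 : ∀ k : Fin 16, scZ relListZH 2 5 (k.val+1) = if k.val = 11 then 1 else 0 := by decide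

-- ===== derived lemmas =====

lemma bra_apply {n : ℕ} (rels) (x y : Fin n → ℝ) (k : Fin n) :
    bra rels x y k = ∑ i, ∑ j, x i * y j * sc rels (i.val + 1) (j.val + 1) (k.val + 1) := rfl

lemma bra_antisymm (x y : Fin 16 → ℝ) : bra relListH x y = - bra relListH y x := by
  funext k
  simp only [bra_apply, Pi.neg_apply]
  rw [Finset.sum_comm, ← Finset.sum_neg_distrib]
  refine Finset.sum_congr rfl fun j _ => ?_
  rw [← Finset.sum_neg_distrib]
  refine Finset.sum_congr rfl fun i _ => ?_
  rw [sc_anti]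
  ring

lemma bra_lowH (y z : Fin 16 → ℝ) (m : Fin 16) (hm : m.val ≤ 9) : bra relListH y z m = 0 := by
  rw [bra_apply]
  refine Finset.sum_eq_zero fun i _ => Finset.sum_eq_zero fun j _ => ?_
  have h := factA i j ⟨m.val, by omega⟩
  simp only [scH, h, Int.cast_zero, mul_zero]

lemma bra_lowG (y z : Fin 16 → ℝ) (m : Fin 16) (hm : m.val ≤ 9) : bra relList y z m = 0 := by
  rw [bra_apply]
  refine Finset.sum_eq_zero fun i _ => Finset.sum_eq_zero fun j _ => ?_
  have h := factAG i j ⟨m.val, by omega⟩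
  simp only [scG, h, Int.cast_zero, mul_zero]

lemma scH_high (i m l : Fin 16) (hm : 10 ≤ m.val) :
    sc relListH (i.val+1) (m.val+1) (l.val+1)
      = if i.val = 0 ∧ m.val = 10 ∧ l.val = 13 then 1 else 0 := by
  have h := factB i l ⟨m.val - 10, by omega⟩
  simp only at h
  rw [show m.val - 10 + 11 = m.val + 1 by omega] at h
  rw [scH, h]
  have h2 : (m.val - 10 = 0) ↔ (m.val = 10) := by omega
  simp only [h2]
  split_ifs <;> norm_num

lemma scG_high (i m l : Fin 16) (hm : 10 ≤ m.val) :
    sc relList (i.val+1) (m.val+1) (l.val+1) = 0 := by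
  have h := factBG i l ⟨m.val - 10, by omega⟩
  simp only at h
  rw [show m.val - 10 + 11 = m.val + 1 by omega] at h
  rw [scG, h, Int.cast_zero]

lemma bra_highH (x y : Fin 16 → ℝ) (h : ∀ m : Fin 16, m.val ≤ 9 → y m = 0) :
    bra relListH x y = (x 0 * y 10) • e 14 := by
  funext l
  rw [bra_apply]
  rw [show (∑ i : Fin 16, ∑ m : Fin 16, x i * y m * sc relListH (i.val+1) (m.val+1) (l.val+1))
      = ∑ i : Fin 16, ∑ m : Fin 16,
          x i * y m * (if i.val = 0 ∧ m.val = 10 ∧ l.val = 13 then 1 else 0) from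
    Finset.sum_congr rfl fun i _ => Finset.sum_congr rfl fun m _ => by
      by_cases hm : m.val ≤ 9
      · rw [h m hm]; ring
      · rw [scH_high i m l (by omega)]]
  simp only [Fin.sum_univ_succ, Fin.sum_univ_zero, Fin.isValue, Fin.val_zero, Fin.val_succ,
    Pi.smul_apply, smul_eq_mul, e]
  norm_num
  have e10 : ((Fin.succ 2).succ.succ.succ.succ.succ.succ.succ : Fin 16) = 10 := rfl
  rw [e10]
  split_ifs with h1 h2 h2
  · ring
  · exact absurd h2 (by omega)
  · exact absurd h1 (by omega)
  · ring

lemma scC_real (j k : Fin 16) : sc relListH (j.val+1) (k.val+1) 11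
    = (if j.val = 0 ∧ k.val = 1 then (1:ℝ) else 0) - (if j.val = 1 ∧ k.val = 0 then 1 else 0) := by
  rw [scH, factC]
  push_cast [apply_ite]
  split_ifs <;> norm_num

lemma bra_coord11 (y z : Fin 16 → ℝ) : bra relListH y z 10 = y 0 * z 1 - y 1 * z 0 := by
  rw [bra_apply]
  simp only [show ((10:Fin 16)).val + 1 = 11 from rfl, scC_real]
  simp only [Fin.sum_univ_succ, Fin.sum_univ_zero, Fin.val_zero, Fin.val_succ]
  norm_num
  ring

lemma jacobi (x y z : Fin 16 → ℝ) :
    bra relListH x (bra relListH y z) + bra relListH y (bra relListH z x)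
      + bra relListH z (bra relListH x y) = 0 := by
  have key : ∀ a b c : Fin 16 → ℝ,
      bra relListH a (bra relListH b c) = ((a 0) * (b 0 * c 1 - b 1 * c 0)) • e 14 := by
    intro a b c
    rw [bra_highH a _ (fun m hm => bra_lowH b c m hm), bra_coord11]
  rw [key, key, key]
  funext l
  simp only [Pi.add_apply, Pi.smul_apply, Pi.zero_apply, smul_eq_mul]
  ring

lemma bra_ee (rels : List (ℕ × ℕ × ℕ × ℝ)) (a b : Fin 16) (k : Fin 16) :
    bra rels (e (a.val+1)) (e (b.val+1)) k = sc rels (a.val+1) (b.val+1) (k.val+1) := by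
  rw [bra_apply]
  simp only [e, add_left_inj, Fin.val_inj]
  simp [Finset.sum_ite_eq', ite_mul, one_mul, zero_mul]

lemma bra_ee' (c1 c2 : ℕ) (a b : Fin 16) (h1 : c1 = a.val + 1) (h2 : c2 = b.val + 1)
    (v : Fin 16) (hv : scZ relListZH c1 c2 (v.val+1) = 1)
    (hz : ∀ k : Fin 16, k ≠ v → scZ relListZH c1 c2 (k.val+1) = 0) :
    bra relListH (e c1) (e c2) = (e (v.val + 1) : Fin 16 → ℝ) := by
  funext k
  rw [h1, h2, bra_ee, scH]
  by_cases hk : k = v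
  · subst hk; rw [← h1, ← h2, hv]; simp [e]
  · rw [← h1, ← h2, hz k hk]
    simp only [Int.cast_zero, e]
    rw [if_neg (by simp only [add_left_inj, Fin.val_inj]; exact fun h => hk (by exact_mod_cast h))]

lemma bra_fact (c1 c2 : ℕ) (a b : Fin 16) (h1 : c1 = a.val+1) (h2 : c2 = b.val+1)
    (t : ℕ) (ht : t ≤ 15)
    (hf : ∀ k : Fin 16, scZ relListZH c1 c2 (k.val+1) = if k.val = t then 1 else 0) :
    bra relListH (e c1) (e c2) = (e (t+1) : Fin 16 → ℝ) := by
  refine bra_ee' c1 c2 a b h1 h2 ⟨t, by omega⟩ ?_ ?_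
  · rw [hf]; simp
  · intro k hk
    rw [hf, if_neg]
    intro h
    exact hk (Fin.ext (by simpa using h))

lemma b12 : bra relListH (e 1) (e 2) = (e 11 : Fin 16 → ℝ) := by
  have h := bra_fact 1 2 0 1 rfl rfl 10 (by omega) fact12; norm_num at h; exact h
lemma b13 : bra relListH (e 1) (e 3) = (e 13 : Fin 16 → ℝ) := by
  have h := bra_fact 1 3 0 2 rfl rfl 12 (by omega) fact13; norm_num at h; exact h
lemma b14 : bra relListH (e 1) (e 4) = (e 14 : Fin 16 → ℝ) := by
  have h := bra_fact 1 4 0 3 rfl rfl 13 (by omega) fact14; norm_num at h; exact h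
lemma b15 : bra relListH (e 1) (e 5) = (e 15 : Fin 16 → ℝ) := by
  have h := bra_fact 1 5 0 4 rfl rfl 14 (by omega) fact15; norm_num at h; exact h
lemma b16 : bra relListH (e 1) (e 6) = (e 16 : Fin 16 → ℝ) := by
  have h := bra_fact 1 6 0 5 rfl rfl 15 (by omega) fact16; norm_num at h; exact h
lemma b25 : bra relListH (e 2) (e 5) = (e 12 : Fin 16 → ℝ) := by
  have h := bra_fact 2 5 1 4 rfl rfl 11 (by omega) fact25; norm_num at h; exact h
lemma b1_11 : bra relListH (e 1) (e 11) = (e 14 : Fin 16 → ℝ) := by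
  have h := bra_fact 1 11 0 10 rfl rfl 13 (by omega) fact1_11; norm_num at h; exact h

lemma pi_repr (v : Fin 16 → ℝ) : v = ∑ m : Fin 16, v m • (e (m.val+1) : Fin 16 → ℝ) := by
  funext k
  simp only [Finset.sum_apply, Pi.smul_apply, e, smul_eq_mul, add_left_inj, Fin.val_inj]
  simp [mul_ite, Finset.sum_ite_eq']

lemma mem_span_high (v : Fin 16 → ℝ) (h : ∀ m : Fin 16, m.val ≤ 9 → v m = 0) :
    v ∈ Submodule.span ℝ (e '' {i | 11 ≤ i ∧ i ≤ 16}) := by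
  rw [pi_repr v]
  refine Submodule.sum_mem _ fun m _ => ?_
  by_cases hm : m.val ≤ 9
  · rw [h m hm]; simp
  · exact Submodule.smul_mem _ _
      (Submodule.subset_span ⟨m.val+1, ⟨by omega, by omega⟩, rfl⟩)

lemma span_low (v : Fin 16 → ℝ)
    (hv : v ∈ Submodule.span ℝ (e '' {i | 11 ≤ i ∧ i ≤ 16}))
    (m : Fin 16) (hm : m.val ≤ 9) : v m = 0 := by
  have hle : Submodule.span ℝ (e '' {i | 11 ≤ i ∧ i ≤ 16})
      ≤ LinearMap.ker (LinearMap.proj (R := ℝ) (φ := fun _ : Fin 16 => ℝ) m) := by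
    rw [Submodule.span_le]
    rintro _ ⟨i, ⟨hi1, hi2⟩, rfl⟩
    simp only [SetLike.mem_coe, LinearMap.mem_ker, LinearMap.proj_apply, e]
    rw [if_neg (by omega)]
  simpa using hle hv

lemma span14_low (v : Fin 16 → ℝ)
    (hv : v ∈ Submodule.span ℝ (e '' {i | i = 14}))
    (m : Fin 16) (hm : m.val ≠ 13) : v m = 0 := by
  have hle : Submodule.span ℝ (e '' {i | i = 14})
      ≤ LinearMap.ker (LinearMap.proj (R := ℝ) (φ := fun _ : Fin 16 => ℝ) m) := by
    rw [Submodule.span_le]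
    rintro _ ⟨i, hi, rfl⟩
    simp only [Set.mem_setOf_eq] at hi
    simp only [SetLike.mem_coe, LinearMap.mem_ker, LinearMap.proj_apply, e]
    rw [if_neg (by omega)]
  simpa using hle hv

lemma e14_ne : (e 14 : Fin 16 → ℝ) ≠ 0 := by
  intro h
  have := congrFun h ⟨13, by omega⟩
  simp [e] at this

lemma hC1 : C 1 = Submodule.span ℝ (e '' {i | 11 ≤ i ∧ i ≤ 16}) := by
  apply le_antisymm
  · show braSpan relListH ⊤ (C 0) ≤ _
    rw [braSpan, Submodule.span_le]
    rintro _ ⟨x, -, y, -, rfl⟩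
    exact mem_span_high _ (bra_lowH x y)
  · rw [Submodule.span_le]
    rintro _ ⟨i, ⟨h1, h2⟩, rfl⟩
    show _ ∈ braSpan relListH ⊤ (C 0)
    interval_cases i
    · exact Submodule.subset_span ⟨e 1, trivial, e 2, trivial, b12⟩
    · exact Submodule.subset_span ⟨e 2, trivial, e 5, trivial, b25⟩
    · exact Submodule.subset_span ⟨e 1, trivial, e 3, trivial, b13⟩
    · exact Submodule.subset_span ⟨e 1, trivial, e 4, trivial, b14⟩
    · exact Submodule.subset_span ⟨e 1, trivial, e 5, trivial, b15⟩
    · exact Submodule.subset_span ⟨e 1, trivial, e 6, trivial, b16⟩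

lemma hC2 : C 2 = Submodule.span ℝ (e '' {i | i = 14}) := by
  apply le_antisymm
  · show braSpan relListH ⊤ (C 1) ≤ _
    rw [braSpan, Submodule.span_le]
    rintro _ ⟨x, -, y, hy, rfl⟩
    rw [hC1] at hy
    rw [bra_highH x y (fun m hm => span_low y hy m hm)]
    exact Submodule.smul_mem _ _ (Submodule.subset_span ⟨14, rfl, rfl⟩)
  · rw [Submodule.span_le]
    rintro _ ⟨i, hi, rfl⟩
    simp only [Set.mem_setOf_eq] at hi
    subst hi
    show _ ∈ braSpan relListH ⊤ (C 1)
    refine Submodule.subset_span ⟨e 1, trivial, e 11, ?_, b1_11⟩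
    rw [hC1]
    exact Submodule.subset_span ⟨11, ⟨by omega, by omega⟩, rfl⟩

lemma hC3 : C 3 = ⊥ := by
  rw [eq_bot_iff]
  show braSpan relListH ⊤ (C 2) ≤ ⊥
  rw [braSpan, Submodule.span_le]
  rintro _ ⟨x, -, y, hy, rfl⟩
  rw [hC2] at hy
  have h10 : y 10 = 0 := span14_low y hy 10 (by decide)
  rw [bra_highH x y (fun m hm => span14_low y hy m (by omega)), h10]
  simp

lemma hC2ne : C 2 ≠ ⊥ := by
  intro hbot
  have h : (e 14 : Fin 16 → ℝ) ∈ C 2 := by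
    rw [hC2]; exact Submodule.subset_span ⟨14, rfl, rfl⟩
  rw [hbot, Submodule.mem_bot] at h
  exact e14_ne h

lemma braG_triple (u v w : Fin 16 → ℝ) : bra relList u (bra relList v w) = 0 := by
  funext l
  rw [bra_apply]
  refine Finset.sum_eq_zero fun i _ => Finset.sum_eq_zero fun m _ => ?_
  by_cases hm : m.val ≤ 9
  · rw [bra_lowG v w m hm]; ring
  · rw [scG_high i m l (by omega)]; ring

lemma noniso : ¬ ∃ φ : (Fin 16 → ℝ) ≃ₗ[ℝ] (Fin 16 → ℝ),
    ∀ x y : Fin 16 → ℝ, φ (bra relListH x y) = bra relList (φ x) (φ y) := by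
  rintro ⟨φ, hφ⟩
  have h1 : bra relListH (e 1) (bra relListH (e 1) (e 2)) = (e 14 : Fin 16 → ℝ) := by
    rw [b12, b1_11]
  have h2 : φ (e 14 : Fin 16 → ℝ) = 0 := by
    rw [← h1, hφ, hφ, braG_triple]
  exact e14_ne (by simpa using φ.injective (by simpa using h2))


/-- The bracket relations of `𝔥` satisfy antisymmetry and the Jacobi identity, hence
define a Lie algebra; its lower central series satisfies `C^2 𝔥 = span{e_11, …, e_16}`,
`C^3 𝔥 = span{e_14}`, `C^4 𝔥 = 0`, so `𝔥` is nilpotent of class exactly 3; in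
particular `𝔥` is not isomorphic to the 2-step algebra `𝔤` obtained by omitting
the bracket `[e_1, e_11] = e_14`. -/
theorem stmt13 :
    (∀ x y : Fin 16 → ℝ, bra relListH x y = - bra relListH y x) ∧
    (∀ x y z : Fin 16 → ℝ,
      bra relListH x (bra relListH y z) + bra relListH y (bra relListH z x)
        + bra relListH z (bra relListH x y) = 0) ∧
    C 1 = Submodule.span ℝ (e '' {i | 11 ≤ i ∧ i ≤ 16}) ∧
    C 2 = Submodule.span ℝ (e '' {i | i = 14}) ∧
    C 3 = ⊥ ∧ C 2 ≠ ⊥ ∧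
    ¬ ∃ φ : (Fin 16 → ℝ) ≃ₗ[ℝ] (Fin 16 → ℝ),
        ∀ x y : Fin 16 → ℝ, φ (bra relListH x y) = bra relList (φ x) (φ y) :=
  ⟨bra_antisymm, jacobi, hC1, hC2, hC3, hC2ne, noniso⟩
end
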